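/- arXiv:2012.07780 — 2 statements merged into one kernel-verified Lean document; each statement's English description precedes it below -/
import Mathlib

section
/- Let (F, V) be a valued field and p(T) = c·∏_{k=1}^N (T - c_k) = Σ_{l=0}^N b_l T^l a polynomial with all roots c_k in F. If ζ is a slope of the Newton polygon of the points {(l, V(b_l)) : l = 0,...,N} of length ℓ, then exactly ℓ of the roots c_k satisfy V(c_k) = ζ. -/
open Polynomial

/-- An additive (Krull) valuation with values in `Γ ∪ {∞}`. -/
structure IsValAdd {R : Type*} [CommRing R] {Γ : Type*} [AddCommGroup Γ] [LinearOrder Γ] [IsOrderedAddMonoid Γ]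
    (v : R → WithTop Γ) : Prop where
  map_mul : ∀ a b, v (a * b) = v a + v b
  map_add : ∀ a b, min (v a) (v b) ≤ v (a + b)
  map_one : v 1 = 0
  map_zero : v 0 = ⊤
  supp : ∀ a, v a = ⊤ → a = 0

/-- The valuation associated to a pair `(a, δ)`:
`ν_{a,δ}(∑ aᵢ (X - a)ⁱ) = min_i (ν aᵢ + i•δ)`. -/
noncomputable def pairVal {K : Type*} [Field K] {Γ : Type*} [AddCommGroup Γ] [LinearOrder Γ] [IsOrderedAddMonoid Γ]
    (ν : K → WithTop Γ) (a : K) (δ : Γ) (f : K[X]) : WithTop Γ :=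
  (Finset.range (f.natDegree + 1)).inf
    fun i => ν ((Polynomial.taylor a f).coeff i) + ((i • δ : Γ) : WithTop Γ)

/-- The coefficients of the `Q`-expansion of a polynomial, by iterated euclidean division. -/
noncomputable def qCoeff {K : Type*} [Field K] (Q : K[X]) : ℕ → K[X] → K[X]
  | 0, f => f %ₘ Q
  | n + 1, f => qCoeff Q n (f /ₘ Q)

/-- The truncation `μ_Q` of `μ` along `Q` : `μ_Q(f) = min_i μ(fᵢ Qⁱ)` over the
`Q`-expansion `f = ∑ fᵢ Qⁱ`. -/
noncomputable def trunc {K : Type*} [Field K] {Γ : Type*} [AddCommGroup Γ] [LinearOrder Γ] [IsOrderedAddMonoid Γ]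
    (μ : K[X] → WithTop Γ) (Q : K[X]) (f : K[X]) : WithTop Γ :=
  (Finset.range (f.natDegree + 1)).inf fun i => μ (qCoeff Q i f * Q ^ i)

/-- `ε_μ(f) < ε_μ(Q)`, stated in cross-multiplied form (valid in the divisible hull). -/
def EpsLt {K : Type*} [Field K] {Γ : Type*} [AddCommGroup Γ] [LinearOrder Γ] [IsOrderedAddMonoid Γ]
    (μ : K[X] → WithTop Γ) (f Q : K[X]) : Prop :=
  ∃ j, 1 ≤ j ∧ μ (hasseDeriv j Q) ≠ ⊤ ∧
    ∀ i, 1 ≤ i → j • μ f + i • μ (hasseDeriv j Q) < i • μ Q + j • μ (hasseDeriv i f)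

/-- `ε_{μ₁}(f) ≤ ε_{μ₂}(g)`, stated in cross-multiplied form. -/
def EpsLE {K L : Type*} [Field K] [Field L] {Γ : Type*} [AddCommGroup Γ] [LinearOrder Γ] [IsOrderedAddMonoid Γ]
    (μ₁ : K[X] → WithTop Γ) (f : K[X]) (μ₂ : L[X] → WithTop Γ) (g : L[X]) : Prop :=
  ∀ i, 1 ≤ i → ∃ j, 1 ≤ j ∧
    j • μ₁ f + i • μ₂ (hasseDeriv j g) ≤ i • μ₂ g + j • μ₁ (hasseDeriv i f)

/-- `Q` is an abstract key polynomial for `μ`. -/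
def IsABKP {K : Type*} [Field K] {Γ : Type*} [AddCommGroup Γ] [LinearOrder Γ] [IsOrderedAddMonoid Γ]
    (μ : K[X] → WithTop Γ) (Q : K[X]) : Prop :=
  Q.Monic ∧ ∀ f : K[X], f ≠ 0 → f.degree < Q.degree → EpsLt μ f Q

/-!
The coefficient `b_l` of `X ^ l` in `c ∏ (X - r k)` is `c` times the elementary symmetric sum of
the `-r k` over the `(N - l)`-subsets `T` of the roots. The term of `T`, shifted by `l • ζ`, has
value `∑_{k ∈ T} V (r k) + ∑_{k ∉ T} ζ ≥ ∑_k min (V (r k)) ζ`, with equality exactly when `T`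
contains every root of value `< ζ` and no root of value `> ζ`. So
`V (b_l) + l • ζ ≥ M := V c + ∑_k min (V (r k)) ζ` for every `l`, strictly for `l` outside
`[N - #{V (r k) ≤ ζ}, N - #{V (r k) < ζ}]`, and with equality at both ends, where a single term is
strictly minimal. Hence these are the endpoints of the face of slope `ζ`, whose length is
`#{V (r k) = ζ}`.
-/

open Finset

theorem WithTop.sum_lt_sum {Γ : Type*} [AddCommGroup Γ] [LinearOrder Γ] [IsOrderedAddMonoid Γ]
    {ι : Type*} [DecidableEq ι] {s : Finset ι} {f g : ι → WithTop Γ}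
    (hf : ∀ i ∈ s, f i ≠ ⊤) (hle : ∀ i ∈ s, f i ≤ g i) (hlt : ∃ j ∈ s, f j < g j) :
    ∑ i ∈ s, f i < ∑ i ∈ s, g i := by
  obtain ⟨j, hj, hfg⟩ := hlt
  rw [← add_sum_erase s f hj, ← add_sum_erase s g hj]
  exact WithTop.add_lt_add_of_lt_of_le
    (WithTop.sum_ne_top.2 fun i hi => hf i (mem_of_mem_erase hi)) hfg
    (sum_le_sum fun i hi => hle i (mem_of_mem_erase hi))

theorem Fintype.sum_piecewise_const {ι M : Type*} [Fintype ι] [DecidableEq ι] [AddCommMonoid M]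
    (T : Finset ι) (t : ι → M) (z : M) :
    ∑ i, T.piecewise t (fun _ => z) i = ∑ i ∈ T, t i + (Fintype.card ι - #T) • z := by
  rw [sum_piecewise, univ_inter, ← compl_eq_univ_sdiff, sum_const, card_compl]

theorem Polynomial.coeff_C_mul_prod_X_sub_C {R ι : Type*} [CommRing R] [Fintype ι]
    (c : R) (r : ι → R) {l : ℕ} (hl : l ≤ Fintype.card ι) :
    (C c * ∏ i, (X - C (r i))).coeff l
      = c * ∑ T ∈ powersetCard (Fintype.card ι - l) univ, ∏ i ∈ T, -r i := by
  simp_rw [sub_eq_add_neg, ← map_neg C]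
  rw [coeff_C_mul, prod_X_add_C_coeff _ _ (by simpa using hl), card_univ]

namespace AddValuation

variable {Γ : Type*} [AddCommGroup Γ] [LinearOrder Γ] [IsOrderedAddMonoid Γ]
  {R : Type*} [CommRing R] (v : AddValuation R (WithTop Γ))

theorem map_prod {ι : Type*} (s : Finset ι) (f : ι → R) :
    v (∏ i ∈ s, f i) = ∑ i ∈ s, v (f i) := by
  classical
  induction s using Finset.induction_on with
  | empty => simp
  | insert i s hi ih => rw [prod_insert hi, sum_insert hi, v.map_mul, ih]

theorem map_sum_eq_of_lt {ι : Type*} [DecidableEq ι] {s : Finset ι} {f : ι → R} {j : ι}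
    (hj : j ∈ s) (hf : ∀ i ∈ s, i ≠ j → v (f j) < v (f i)) :
    v (∑ i ∈ s, f i) = v (f j) := by
  rw [← add_sum_erase s f hj]
  rcases (s.erase j).eq_empty_or_nonempty with hempty | ⟨i, hi⟩
  · simp [hempty]
  · have hfin : v (f j) ≠ ⊤ := (hf i (mem_of_mem_erase hi) (ne_of_mem_erase hi)).ne_top
    exact v.map_add_eq_of_lt_left
      (v.map_lt_sum hfin fun i hi => hf i (mem_of_mem_erase hi) (ne_of_mem_erase hi))

end AddValuation

def IsValAdd.toAddValuation {Γ : Type*} [AddCommGroup Γ] [LinearOrder Γ] [IsOrderedAddMonoid Γ]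
    {R : Type*} [CommRing R] {V : R → WithTop Γ} (hV : IsValAdd V) : AddValuation R (WithTop Γ) :=
  AddValuation.of V hV.map_zero hV.map_one hV.map_add hV.map_mul

namespace NewtonPolygon

variable {Γ : Type*} [LinearOrder Γ] {ι : Type*} [Fintype ι]

section Weights

variable (t : ι → WithTop Γ) (ζ : Γ)

def below : Finset ι := {i | t i < ζ}

def atMost : Finset ι := {i | t i ≤ ζ}

variable {t ζ}

@[simp]
theorem mem_below {i : ι} : i ∈ below t ζ ↔ t i < ζ := by simp [below]

@[simp]
theorem mem_atMost {i : ι} : i ∈ atMost t ζ ↔ t i ≤ ζ := by simp [atMost]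

theorem below_subset_atMost : below t ζ ⊆ atMost t ζ := fun _ hi =>
  mem_atMost.2 (mem_below.1 hi).le

theorem card_atMost_sub_card_below [DecidableEq ι] :
    #(atMost t ζ) - #(below t ζ) = #({i | t i = ζ} : Finset ι) := by
  rw [← card_sdiff_of_subset below_subset_atMost]
  congr 1
  ext i
  simp only [mem_sdiff, mem_atMost, mem_below, mem_filter, mem_univ, true_and, not_lt]
  exact ⟨fun h => le_antisymm h.1 h.2, fun h => ⟨h.le, h.ge⟩⟩

variable [AddCommGroup Γ] [DecidableEq ι]

theorem sum_add_nsmul_eq_sum_min {T : Finset ι} (hA : below t ζ ⊆ T) (hB : T ⊆ atMost t ζ) :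
    ∑ i ∈ T, t i + ((Fintype.card ι - #T) • ζ : Γ) = ∑ i, min (t i) ζ := by
  rw [WithTop.coe_nsmul, ← Fintype.sum_piecewise_const]
  refine sum_congr rfl fun i _ => ?_
  by_cases hi : i ∈ T
  · simp [hi, mem_atMost.1 (hB hi)]
  · have : ¬ t i < ζ := fun h => hi (hA (mem_below.2 h))
    simp [hi, not_lt.1 this]

variable [IsOrderedAddMonoid Γ]

theorem sum_min_le_sum_add_nsmul (T : Finset ι) :
    ∑ i, min (t i) ζ ≤ ∑ i ∈ T, t i + ((Fintype.card ι - #T) • ζ : Γ) := by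
  rw [WithTop.coe_nsmul, ← Fintype.sum_piecewise_const]
  refine sum_le_sum fun i _ => ?_
  by_cases hi : i ∈ T <;> simp [hi]

theorem sum_min_lt_sum_add_nsmul {T : Finset ι} (hT : ¬ (below t ζ ⊆ T ∧ T ⊆ atMost t ζ)) :
    ∑ i, min (t i) ζ < ∑ i ∈ T, t i + ((Fintype.card ι - #T) • ζ : Γ) := by
  rw [WithTop.coe_nsmul, ← Fintype.sum_piecewise_const]
  refine WithTop.sum_lt_sum (fun i _ => ((min_le_right _ _).trans_lt (WithTop.coe_lt_top ζ)).ne)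
    (fun i _ => by by_cases hi : i ∈ T <;> simp [hi]) ?_
  rw [not_and_or, not_subset, not_subset] at hT
  rcases hT with ⟨i, hiA, hiT⟩ | ⟨i, hiT, hiB⟩
  · rw [mem_below] at hiA
    exact ⟨i, mem_univ i, by simpa [hiT, hiA.le] using hiA⟩
  · rw [mem_atMost, not_le] at hiB
    exact ⟨i, mem_univ i, by simpa [hiT, hiB.le] using hiB⟩

end Weights

section Esymm

variable [AddCommGroup Γ] [IsOrderedAddMonoid Γ] {R : Type*} [CommRing R]
  (v : AddValuation R (WithTop Γ)) (f : ι → R) (ζ : Γ)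

theorem exists_card_eq_map_prod_le_map_esymm {m : ℕ} (hm : m ≤ Fintype.card ι) :
    ∃ T : Finset ι, #T = m ∧
      ∑ i ∈ T, v (f i) ≤ v (∑ T ∈ powersetCard m univ, ∏ i ∈ T, f i) := by
  obtain ⟨T₀, hT₀, hmin⟩ := exists_min_image (powersetCard m univ) (fun T => v (∏ i ∈ T, f i))
    (powersetCard_nonempty.2 (by simpa using hm))
  refine ⟨T₀, mem_powersetCard_univ.1 hT₀, ?_⟩
  rw [← v.map_prod]
  exact v.map_le_sum hmin

variable [DecidableEq ι]

theorem sum_min_le_map_esymm_add_nsmul {m : ℕ} (hm : m ≤ Fintype.card ι) :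
    ∑ i, min (v (f i)) ζ
      ≤ v (∑ T ∈ powersetCard m univ, ∏ i ∈ T, f i) + ((Fintype.card ι - m) • ζ : Γ) := by
  obtain ⟨T, rfl, hT⟩ := exists_card_eq_map_prod_le_map_esymm v f hm
  exact (sum_min_le_sum_add_nsmul T).trans (add_le_add_left hT _)

theorem sum_min_lt_map_esymm_add_nsmul {m : ℕ} (hm : m ≤ Fintype.card ι)
    (hout : m < #(below (fun i => v (f i)) ζ) ∨ #(atMost (fun i => v (f i)) ζ) < m) :
    ∑ i, min (v (f i)) ζ
      < v (∑ T ∈ powersetCard m univ, ∏ i ∈ T, f i) + ((Fintype.card ι - m) • ζ : Γ) := by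
  obtain ⟨T, rfl, hT⟩ := exists_card_eq_map_prod_le_map_esymm v f hm
  refine (sum_min_lt_sum_add_nsmul fun hAB => ?_).trans_le (add_le_add_left hT _)
  rcases hout with h | h
  · exact h.not_ge (card_le_card hAB.1)
  · exact h.not_ge (card_le_card hAB.2)

theorem map_esymm_add_nsmul_eq_sum_min {T₀ : Finset ι}
    (hT₀ : T₀ = below (fun i => v (f i)) ζ ∨ T₀ = atMost (fun i => v (f i)) ζ) :
    v (∑ T ∈ powersetCard #T₀ univ, ∏ i ∈ T, f i) + ((Fintype.card ι - #T₀) • ζ : Γ)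
      = ∑ i, min (v (f i)) ζ := by
  have hA : below (fun i => v (f i)) ζ ⊆ T₀ := by
    rcases hT₀ with rfl | rfl
    exacts [subset_rfl, below_subset_atMost]
  have hB : T₀ ⊆ atMost (fun i => v (f i)) ζ := by
    rcases hT₀ with rfl | rfl
    exacts [below_subset_atMost, subset_rfl]
  have hunique : ∀ T ∈ powersetCard #T₀ univ, T ≠ T₀ →
      v (∏ i ∈ T₀, f i) < v (∏ i ∈ T, f i) := by
    intro T hT hne
    rw [mem_powersetCard_univ] at hT
    rw [v.map_prod, v.map_prod, ← WithTop.add_lt_add_iff_right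
      (WithTop.coe_ne_top (a := (Fintype.card ι - #T₀) • ζ))]
    refine (sum_add_nsmul_eq_sum_min hA hB).trans_lt ?_
    rw [← hT]
    refine sum_min_lt_sum_add_nsmul fun hAB => hne ?_
    rcases hT₀ with rfl | rfl
    · exact (eq_of_subset_of_card_le hAB.1 hT.le).symm
    · exact eq_of_subset_of_card_le hAB.2 hT.ge
  rw [v.map_sum_eq_of_lt (mem_powersetCard_univ.2 rfl) hunique, v.map_prod]
  exact sum_add_nsmul_eq_sum_min hA hB

end Esymm

section Coefficients

variable [AddCommGroup Γ] [IsOrderedAddMonoid Γ] {R : Type*} [CommRing R]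
  (v : AddValuation R (WithTop Γ)) [DecidableEq ι] (c : R) (r : ι → R) (ζ : Γ)

theorem add_sum_min_le_map_coeff_add_nsmul {l : ℕ} (hl : l ≤ Fintype.card ι) :
    v c + ∑ i, min (v (r i)) ζ ≤ v ((C c * ∏ i, (X - C (r i))).coeff l) + (l • ζ : Γ) := by
  have h := sum_min_le_map_esymm_add_nsmul v (fun i => -r i) ζ (Nat.sub_le _ l)
  simp only [v.map_neg, Nat.sub_sub_self hl] at h
  rw [coeff_C_mul_prod_X_sub_C c r hl, v.map_mul, add_assoc]
  gcongr

theorem add_sum_min_lt_map_coeff_add_nsmul (hc : v c ≠ ⊤) {l : ℕ} (hl : l ≤ Fintype.card ι)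
    (hout : l < Fintype.card ι - #(atMost (fun i => v (r i)) ζ)
      ∨ Fintype.card ι - #(below (fun i => v (r i)) ζ) < l) :
    v c + ∑ i, min (v (r i)) ζ < v ((C c * ∏ i, (X - C (r i))).coeff l) + (l • ζ : Γ) := by
  have hA := card_le_univ (below (fun i => v (r i)) ζ)
  have hB := card_le_univ (atMost (fun i => v (r i)) ζ)
  have h := sum_min_lt_map_esymm_add_nsmul v (fun i => -r i) ζ (Nat.sub_le _ l)
    (by simp only [v.map_neg]; omega)
  simp only [v.map_neg, Nat.sub_sub_self hl] at h
  rw [coeff_C_mul_prod_X_sub_C c r hl, v.map_mul, add_assoc]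
  exact WithTop.add_lt_add_left hc h

theorem map_coeff_add_nsmul_eq_add_sum_min {T₀ : Finset ι}
    (hT₀ : T₀ = below (fun i => v (r i)) ζ ∨ T₀ = atMost (fun i => v (r i)) ζ) :
    v ((C c * ∏ i, (X - C (r i))).coeff (Fintype.card ι - #T₀))
        + ((Fintype.card ι - #T₀) • ζ : Γ) = v c + ∑ i, min (v (r i)) ζ := by
  have h := map_esymm_add_nsmul_eq_sum_min v (fun i => -r i) ζ (by simpa only [v.map_neg] using hT₀)
  simp only [v.map_neg] at h
  rw [coeff_C_mul_prod_X_sub_C c r (Nat.sub_le _ _), Nat.sub_sub_self (card_le_univ T₀), v.map_mul,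
    add_assoc, h]

end Coefficients

theorem face_endpoints_eq {α : Type*} [LinearOrder α] {g : ℕ → α} {M : α} {N lo hi a a' : ℕ}
    (hge : ∀ l ≤ N, M ≤ g l) (hgt : ∀ l ≤ N, l < lo ∨ hi < l → M < g l)
    (hlo : g lo = M) (hhi : g hi = M) (hloN : lo ≤ N) (hhiN : hi ≤ N)
    (haN : a ≤ N) (ha'N : a' ≤ N) (heq : g a = g a')
    (hface : ∀ l ≤ N, g a ≤ g l) (hstrict : ∀ l ≤ N, l < a ∨ a' < l → g a < g l) :
    a = lo ∧ a' = hi := by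
  have hgaM : g a = M := le_antisymm (hlo ▸ hface lo hloN) (hge a haN)
  have hbetween_lo : ∀ l ≤ N, g l = M → lo ≤ l ∧ l ≤ hi := fun l hl hgl => by
    by_contra h
    exact (hgt l hl (by omega)).ne' hgl
  have hbetween_a : ∀ l ≤ N, g l = M → a ≤ l ∧ l ≤ a' := fun l hl hgl => by
    by_contra h
    exact (hstrict l hl (by omega)).ne' (hgl.trans hgaM.symm)
  have := hbetween_lo a haN hgaM
  have := hbetween_lo a' ha'N (heq ▸ hgaM)
  have := hbetween_a lo hloN hlo
  have := hbetween_a hi hhiN hhi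
  omega

end NewtonPolygon

open NewtonPolygon

theorem newton_polygon_slope_roots_general {F Γ : Type*} [Field F] [AddCommGroup Γ] [LinearOrder Γ] [IsOrderedAddMonoid Γ]
    (V : F → WithTop Γ) (hV : IsValAdd V)
    (N : ℕ) (c : F) (hc : c ≠ 0) (r : Fin N → F)
    (p : Polynomial F) (hp : p = Polynomial.C c * ∏ k, (Polynomial.X - Polynomial.C (r k)))
    (ζ : Γ) (a a' : ℕ) (haa : a < a') (ha'N : a' ≤ N)
    (heq : V (p.coeff a) + ((a • ζ : Γ) : WithTop Γ)
            = V (p.coeff a') + ((a' • ζ : Γ) : WithTop Γ))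
    (hface : ∀ l ≤ N,
      V (p.coeff a) + ((a • ζ : Γ) : WithTop Γ) ≤ V (p.coeff l) + ((l • ζ : Γ) : WithTop Γ))
    (hstrict : ∀ l ≤ N, l < a ∨ a' < l →
      V (p.coeff a) + ((a • ζ : Γ) : WithTop Γ) < V (p.coeff l) + ((l • ζ : Γ) : WithTop Γ)) :
    Nat.card {k : Fin N // V (r k) = (ζ : WithTop Γ)} = a' - a := by
  subst hp
  set v := hV.toAddValuation
  have hvc : v c ≠ ⊤ := fun h => hc (hV.supp c h)
  have hlo := map_coeff_add_nsmul_eq_add_sum_min v c r ζ (.inr rfl)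
  have hhi := map_coeff_add_nsmul_eq_add_sum_min v c r ζ (.inl rfl)
  have hAB := card_le_card (below_subset_atMost (t := fun k => v (r k)) (ζ := ζ))
  have hBN := card_le_univ (atMost (fun k => v (r k)) ζ)
  rw [Fintype.card_fin] at hlo hhi hBN
  obtain ⟨rfl, rfl⟩ := face_endpoints_eq
    (g := fun l => v ((C c * ∏ k, (X - C (r k))).coeff l) + (l • ζ : Γ))
    (fun l hl => add_sum_min_le_map_coeff_add_nsmul v c r ζ (by simpa using hl))
    (fun l hl hout => add_sum_min_lt_map_coeff_add_nsmul v c r ζ hvc (by simpa using hl)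
      (by simpa using hout))
    hlo hhi (by omega) (by omega) (by omega) ha'N heq hface hstrict
  rw [Nat.card_eq_fintype_card, Fintype.card_subtype, ← card_atMost_sub_card_below]
  change #(atMost (fun k => v (r k)) ζ) - #(below (fun k => v (r k)) ζ) = _
  omega

/-- if `ζ` is a slope of the Newton polygon of a split polynomial
`p = c ∏ (T - cₖ)`, supported on the face with endpoints of abscissae `a < a'`
(so of length `ℓ = a' - a`), then exactly `ℓ` of the roots have valuation `ζ`. -/
theorem newton_polygon_slope_roots {F Γ : Type*} [Field F] [AddCommGroup Γ] [LinearOrder Γ] [IsOrderedAddMonoid Γ]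
    (V : F → WithTop Γ) (hV : IsValAdd V)
    (N : ℕ) (c : F) (hc : c ≠ 0) (r : Fin N → F)
    (p : Polynomial F) (hp : p = Polynomial.C c * ∏ k, (Polynomial.X - Polynomial.C (r k)))
    (ζ : Γ) (a a' : ℕ) (haa : a < a') (ha'N : a' ≤ N)
    (hfina : V (p.coeff a) ≠ ⊤) (hfina' : V (p.coeff a') ≠ ⊤)
    (heq : V (p.coeff a) + ((a • ζ : Γ) : WithTop Γ)
            = V (p.coeff a') + ((a' • ζ : Γ) : WithTop Γ))
    (hface : ∀ l ≤ N,
      V (p.coeff a) + ((a • ζ : Γ) : WithTop Γ) ≤ V (p.coeff l) + ((l • ζ : Γ) : WithTop Γ))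
    (hstrict : ∀ l ≤ N, l < a ∨ a' < l →
      V (p.coeff a) + ((a • ζ : Γ) : WithTop Γ) < V (p.coeff l) + ((l • ζ : Γ) : WithTop Γ)) :
    Nat.card {k : Fin N // V (r k) = (ζ : WithTop Γ)} = a' - a :=
  newton_polygon_slope_roots_general V hV N c hc r p hp ζ a a' haa ha'N heq hface hstrict
end

section
/- Let Q ∈ K[X] be an abstract key polynomial for μ and a ∈ K̄ an optimising root of Q with δ = μ̄(X - a). Then μ̄_{X-a}(Q) = μ(Q); consequently the truncation μ̄_{X-a} restricted to K[X] equals μ_Q. -/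
open Polynomial

/-!
Write `μ̄_{X-a}` for `pairVal ν̄ a δ`. It is the Gauss valuation of the Taylor expansion at `a`,
hence a valuation, and it is bounded above by `μ̄`. On each linear factor `X - b` of `Q` over `L`,
optimality of `a` gives `μ̄(X - b) ≤ δ` and hence `μ̄_{X-a}(X - b) = μ̄(X - b)`; multiplying,
`μ̄_{X-a}(Q) = μ̄(Q) = μ(Q)`. Comparing with `μ̄_{X-a}(∂ⱼ Q)` this says `ε_μ(Q) ≤ δ`, so
`ε_μ(f) < δ` whenever `deg f < deg Q`. An induction on the degree then shows that every root `θ`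
of such an `f` satisfies `μ̄(X - θ) < δ`, whence `ν̄(f(a)) = μ(f)` and `μ̄_{X-a}(f) = μ(f)`.
Finally, for `f = r + Q q` with `deg r < deg Q` one gets
`μ̄_{X-a}(f) = min(μ(r), μ(Q) + μ̄_{X-a}(q))`, which is the recursion satisfied by `μ_Q`.
-/

theorem add_add_coe_add_nsmul {Γ : Type*} [AddCommMonoid Γ] (x y : WithTop Γ) (δ : Γ) (i j : ℕ) :
    x + y + (((i + j) • δ : Γ) : WithTop Γ) =
      (x + ((i • δ : Γ) : WithTop Γ)) + (y + ((j • δ : Γ) : WithTop Γ)) := by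
  rw [add_nsmul, WithTop.coe_add, add_add_add_comm]

theorem Polynomial.taylor_hasseDeriv {R : Type*} [CommSemiring R] (r : R) (k : ℕ) (f : R[X]) :
    taylor r (hasseDeriv k f) = hasseDeriv k (taylor r f) := by
  ext n
  have hcomp := LinearMap.congr_fun (hasseDeriv_comp n k) f
  rw [LinearMap.comp_apply, LinearMap.smul_apply] at hcomp
  rw [taylor_coeff, hcomp, eval_smul, nsmul_eq_mul, hasseDeriv_coeff, taylor_coeff,
    Nat.choose_symm_add]

theorem Polynomial.map_hasseDeriv {R S : Type*} [Semiring R] [Semiring S] (φ : R →+* S) (k : ℕ)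
    (f : R[X]) : (hasseDeriv k f).map φ = hasseDeriv k (f.map φ) := by
  ext n
  simp [hasseDeriv_coeff, coeff_map]

theorem Polynomial.natDegree_hasseDeriv_lt {R : Type*} [Semiring R] {f : R[X]} {k : ℕ}
    (hk : 1 ≤ k) (h : hasseDeriv k f ≠ 0) : (hasseDeriv k f).natDegree < f.natDegree := by
  have hkf : k ≤ f.natDegree := by
    by_contra! hlt
    exact h (hasseDeriv_eq_zero_of_lt_natDegree f k hlt)
  have := natDegree_hasseDeriv_le f k
  omega

namespace IsValAdd

variable {R S Γ : Type*} [CommRing R] [CommRing S] [AddCommGroup Γ] [LinearOrder Γ]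
  [IsOrderedAddMonoid Γ] {v : R → WithTop Γ}

def toAddValuation_s10 (hv : IsValAdd v) : AddValuation R (WithTop Γ) :=
  AddValuation.of v hv.map_zero hv.map_one hv.map_add hv.map_mul

variable (hv : IsValAdd v)
include hv

theorem ne_top {x : R} (hx : x ≠ 0) : v x ≠ ⊤ := fun h => hx (hv.supp x h)

theorem map_sub (x y : R) : min (v x) (v y) ≤ v (x - y) := hv.toAddValuation_s10.map_sub x y

theorem map_add_eq_of_lt_left {x y : R} (h : v x < v y) : v (x + y) = v x :=
  hv.toAddValuation_s10.map_add_eq_of_lt_left h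

theorem map_add_eq_of_lt_right {x y : R} (h : v y < v x) : v (x + y) = v y :=
  hv.toAddValuation_s10.map_add_eq_of_lt_right h

theorem map_sub_eq_of_lt_left {x y : R} (h : v x < v y) : v (x - y) = v x :=
  hv.toAddValuation_s10.map_sub_eq_of_lt_left h

theorem le_map_sum {ι : Type*} {s : Finset ι} {f : ι → R} {m : WithTop Γ}
    (h : ∀ i ∈ s, m ≤ v (f i)) : m ≤ v (∑ i ∈ s, f i) :=
  hv.toAddValuation_s10.map_le_sum h

theorem le_map_sum_add {ι : Type*} {s : Finset ι} {f : ι → R} {m c : WithTop Γ}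
    (h : ∀ i ∈ s, m ≤ v (f i) + c) : m ≤ v (∑ i ∈ s, f i) + c := by
  have hinf : m ≤ s.inf (fun i => v (f i)) + c := by
    rw [Finset.apply_inf_eq_inf_comp (· + c) (fun x y => (min_add_add_right x y c).symm)
      (top_add c)]
    exact Finset.le_inf h
  exact hinf.trans (add_le_add_left (hv.le_map_sum fun i hi =>
    Finset.inf_le (f := fun i => v (f i)) hi) c)

theorem lt_map_sum {ι : Type*} {s : Finset ι} {f : ι → R} {m : WithTop Γ} (hm : m ≠ ⊤)
    (h : ∀ i ∈ s, m < v (f i)) : m < v (∑ i ∈ s, f i) :=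
  hv.toAddValuation_s10.map_lt_sum hm h

theorem map_pow (x : R) (n : ℕ) : v (x ^ n) = n • v x := hv.toAddValuation_s10.map_pow x n

theorem map_multiset_prod_map {ι : Type*} (s : Multiset ι) (f : ι → R) :
    v (s.map f).prod = (s.map fun i => v (f i)).sum := by
  induction s using Multiset.induction_on with
  | empty => simp [hv.map_one]
  | cons i s ih => simp [hv.map_mul, ih]

theorem map_natCast_nonneg (n : ℕ) : 0 ≤ v n := by
  induction n with
  | zero => simp [hv.map_zero]
  | succ n ih =>
    rw [Nat.cast_succ]
    exact (le_min ih hv.map_one.ge).trans (hv.map_add _ _)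

theorem comp {f : S →+* R} (hf : Function.Injective f) : IsValAdd (v ∘ f) where
  map_mul a b := by simp [hv.map_mul]
  map_add a b := by simpa using hv.map_add (f a) (f b)
  map_one := by simp [hv.map_one]
  map_zero := by simp [hv.map_zero]
  supp a ha := hf (by simpa using hv.supp _ ha)

end IsValAdd

section GaussVal

variable {R Γ : Type*} [CommRing R] [AddCommGroup Γ] [LinearOrder Γ] [IsOrderedAddMonoid Γ]

noncomputable def gaussVal (ν : R → WithTop Γ) (δ : Γ) (g : R[X]) : WithTop Γ :=
  (Finset.range (g.natDegree + 1)).inf fun i => ν (g.coeff i) + ((i • δ : Γ) : WithTop Γ)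

variable {ν : R → WithTop Γ} (hν : IsValAdd ν) (δ : Γ)
include hν

theorem le_gaussVal_iff {m : WithTop Γ} {g : R[X]} :
    m ≤ gaussVal ν δ g ↔ ∀ i, m ≤ ν (g.coeff i) + ((i • δ : Γ) : WithTop Γ) := by
  refine ⟨fun h i => ?_, fun h => Finset.le_inf fun i _ => h i⟩
  rcases le_or_gt i g.natDegree with hi | hi
  · exact h.trans (Finset.inf_le (Finset.mem_range_succ_iff.mpr hi))
  · simp [coeff_eq_zero_of_natDegree_lt hi, hν.map_zero]

theorem gaussVal_le (g : R[X]) (i : ℕ) :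
    gaussVal ν δ g ≤ ν (g.coeff i) + ((i • δ : Γ) : WithTop Γ) :=
  (le_gaussVal_iff hν δ).mp le_rfl i

theorem exists_gaussVal_eq_and_forall_lt (g : R[X]) :
    ∃ i, gaussVal ν δ g = ν (g.coeff i) + ((i • δ : Γ) : WithTop Γ) ∧
      ∀ j < i, gaussVal ν δ g < ν (g.coeff j) + ((j • δ : Γ) : WithTop Γ) := by
  classical
  obtain ⟨i, -, hi⟩ := Finset.exists_mem_eq_inf _ Finset.nonempty_range_add_one
    fun i => ν (g.coeff i) + ((i • δ : Γ) : WithTop Γ)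
  have hex : ∃ i, gaussVal ν δ g = ν (g.coeff i) + ((i • δ : Γ) : WithTop Γ) := ⟨i, hi⟩
  exact ⟨Nat.find hex, Nat.find_spec hex, fun j hj =>
    (gaussVal_le hν δ g j).lt_of_ne (Nat.find_min hex hj)⟩

theorem gaussVal_ne_top {g : R[X]} (hg : g ≠ 0) : gaussVal ν δ g ≠ ⊤ := by
  refine ne_top_of_le_ne_top ?_ (gaussVal_le hν δ g g.natDegree)
  exact WithTop.add_ne_top.mpr ⟨hν.ne_top (leadingCoeff_ne_zero.mpr hg), WithTop.coe_ne_top⟩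

theorem gaussVal_zero : gaussVal ν δ 0 = ⊤ := by simp [gaussVal, hν.map_zero]

theorem add_le_gaussVal_mul (f g : R[X]) :
    gaussVal ν δ f + gaussVal ν δ g ≤ gaussVal ν δ (f * g) := by
  refine (le_gaussVal_iff hν δ).mpr fun k => ?_
  rw [coeff_mul]
  refine hν.le_map_sum_add fun x hx => ?_
  rw [← Finset.HasAntidiagonal.mem_antidiagonal.mp hx, hν.map_mul, add_add_coe_add_nsmul]
  exact add_le_add (gaussVal_le hν δ f x.1) (gaussVal_le hν δ g x.2)

/-- The product of the first coefficients of `f` and `g` at which the minima are attained is the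
unique term of minimal value in the corresponding coefficient of `f * g`. -/
theorem gaussVal_mul_le_add (f g : R[X]) :
    gaussVal ν δ (f * g) ≤ gaussVal ν δ f + gaussVal ν δ g := by
  rcases eq_or_ne f 0 with rfl | hf
  · simp [gaussVal_zero hν]
  rcases eq_or_ne g 0 with rfl | hg
  · simp [gaussVal_zero hν]
  obtain ⟨i, hi, hi_lt⟩ := exists_gaussVal_eq_and_forall_lt hν δ f
  obtain ⟨j, hj, hj_lt⟩ := exists_gaussVal_eq_and_forall_lt hν δ g
  have hf_top := gaussVal_ne_top hν δ hf
  have hg_top := gaussVal_ne_top hν δ hg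
  have hij_top : ν (f.coeff i * g.coeff j) ≠ ⊤ := by
    rw [hν.map_mul]
    refine WithTop.add_ne_top.mpr ⟨fun h => hf_top ?_, fun h => hg_top ?_⟩
    · rw [hi, h, top_add]
    · rw [hj, h, top_add]
  have hmem : (i, j) ∈ Finset.HasAntidiagonal.antidiagonal (i + j) :=
    Finset.HasAntidiagonal.mem_antidiagonal.mpr rfl
  have hcoeff : ν ((f * g).coeff (i + j)) = ν (f.coeff i * g.coeff j) := by
    classical
    rw [coeff_mul, ← Finset.add_sum_erase _ _ hmem]
    refine hν.map_add_eq_of_lt_left (hν.lt_map_sum hij_top fun x hx => ?_)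
    obtain ⟨hne, hx⟩ := Finset.mem_erase.mp hx
    have hsum := Finset.HasAntidiagonal.mem_antidiagonal.mp hx
    rw [← WithTop.add_lt_add_iff_right (WithTop.coe_ne_top (a := (i + j) • δ)), hν.map_mul,
      hν.map_mul, add_add_coe_add_nsmul, ← hsum, add_add_coe_add_nsmul, ← hi, ← hj]
    by_cases hxi : x.1 < i
    · exact WithTop.add_lt_add_of_lt_of_le hg_top (hi_lt _ hxi) (gaussVal_le hν δ g x.2)
    · have hxj : x.2 < j := by
        have : x.1 ≠ i ∨ x.2 ≠ j := by
          by_contra! h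
          exact hne (Prod.ext h.1 h.2)
        omega
      exact WithTop.add_lt_add_of_le_of_lt hf_top (gaussVal_le hν δ f x.1) (hj_lt _ hxj)
  calc gaussVal ν δ (f * g) ≤ ν ((f * g).coeff (i + j)) + (((i + j) • δ : Γ) : WithTop Γ) :=
        gaussVal_le hν δ _ _
    _ = gaussVal ν δ f + gaussVal ν δ g := by
        rw [hcoeff, hν.map_mul, add_add_coe_add_nsmul, ← hi, ← hj]

theorem isValAdd_gaussVal : IsValAdd (gaussVal ν δ) where
  map_mul f g := le_antisymm (gaussVal_mul_le_add hν δ f g) (add_le_gaussVal_mul hν δ f g)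
  map_add f g := (le_gaussVal_iff hν δ).mpr fun k => by
    calc min (gaussVal ν δ f) (gaussVal ν δ g)
        ≤ min (ν (f.coeff k) + ((k • δ : Γ) : WithTop Γ))
            (ν (g.coeff k) + ((k • δ : Γ) : WithTop Γ)) :=
          min_le_min (gaussVal_le hν δ f k) (gaussVal_le hν δ g k)
      _ = min (ν (f.coeff k)) (ν (g.coeff k)) + ((k • δ : Γ) : WithTop Γ) := min_add_add_right _ _ _
      _ ≤ ν ((f + g).coeff k) + ((k • δ : Γ) : WithTop Γ) := by
          rw [coeff_add]; exact add_le_add_left (hν.map_add _ _) _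
  map_one := by simp [gaussVal, hν.map_one]
  map_zero := gaussVal_zero hν δ
  supp g hg := by
    by_contra h
    exact gaussVal_ne_top hν δ h hg

theorem gaussVal_le_hasseDeriv_add (F : R[X]) (k : ℕ) :
    gaussVal ν δ F ≤ gaussVal ν δ (hasseDeriv k F) + ((k • δ : Γ) : WithTop Γ) := by
  obtain ⟨n, hn, -⟩ := exists_gaussVal_eq_and_forall_lt hν δ (hasseDeriv k F)
  calc gaussVal ν δ F ≤ ν (F.coeff (n + k)) + (((n + k) • δ : Γ) : WithTop Γ) :=
        gaussVal_le hν δ F (n + k)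
    _ ≤ ν ((n + k).choose k) + ν (F.coeff (n + k)) + (((n + k) • δ : Γ) : WithTop Γ) := by
        gcongr
        exact le_add_of_nonneg_left (hν.map_natCast_nonneg _)
    _ = gaussVal ν δ (hasseDeriv k F) + ((k • δ : Γ) : WithTop Γ) := by
        rw [hn, hasseDeriv_coeff, hν.map_mul, add_nsmul, WithTop.coe_add]
        simp only [add_assoc]

end GaussVal

section PairVal

variable {K Γ : Type*} [Field K] [AddCommGroup Γ] [LinearOrder Γ] [IsOrderedAddMonoid Γ]
  {ν : K → WithTop Γ} (hν : IsValAdd ν) (a : K) (δ : Γ)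

theorem pairVal_eq_gaussVal_comp_taylor : pairVal ν a δ = gaussVal ν δ ∘ taylor a := by
  ext g
  simp only [pairVal, gaussVal, Function.comp_apply, natDegree_taylor]

theorem pairVal_C (c : K) : pairVal ν a δ (C c) = ν c := by
  simp [pairVal]

include hν

theorem isValAdd_pairVal : IsValAdd (pairVal ν a δ) := by
  rw [pairVal_eq_gaussVal_comp_taylor]
  exact (isValAdd_gaussVal hν δ).comp (f := (taylorAlgHom a : K[X] →+* K[X])) (taylor_injective a)

theorem le_pairVal_iff {m : WithTop Γ} {g : K[X]} :
    m ≤ pairVal ν a δ g ↔ ∀ i, m ≤ ν ((taylor a g).coeff i) + ((i • δ : Γ) : WithTop Γ) := by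
  rw [pairVal_eq_gaussVal_comp_taylor, Function.comp_apply, le_gaussVal_iff hν]

theorem pairVal_le_taylor_coeff (g : K[X]) (i : ℕ) :
    pairVal ν a δ g ≤ ν ((taylor a g).coeff i) + ((i • δ : Γ) : WithTop Γ) :=
  (le_pairVal_iff hν a δ).mp le_rfl i

theorem pairVal_le_eval (g : K[X]) : pairVal ν a δ g ≤ ν (g.eval a) := by
  simpa using pairVal_le_taylor_coeff hν a δ g 0

theorem pairVal_X_sub_C_self : pairVal ν a δ (X - C a) = δ := by
  simp [pairVal, Finset.range_add_one, hν.map_zero, hν.map_one]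

theorem pairVal_le_hasseDeriv_add (g : K[X]) (k : ℕ) :
    pairVal ν a δ g ≤ pairVal ν a δ (hasseDeriv k g) + ((k • δ : Γ) : WithTop Γ) := by
  simp only [pairVal_eq_gaussVal_comp_taylor, Function.comp_apply, taylor_hasseDeriv]
  exact gaussVal_le_hasseDeriv_add hν δ _ k

end PairVal

/-- In terms of slopes: if `ε_μ(f) < ε_μ(Q) ≤ δ`, then `(μ(f) - μ(∂ᵢ f)) / i < δ` for all
`i ≥ 1`. -/
theorem EpsLt.lt_hasseDeriv_add {K Γ : Type*} [Field K] [AddCommGroup Γ] [LinearOrder Γ]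
    [IsOrderedAddMonoid Γ] {μ : K[X] → WithTop Γ} {f Q : K[X]} {δ : Γ} (h : EpsLt μ f Q)
    (hQ : ∀ j, 1 ≤ j → μ Q ≤ μ (hasseDeriv j Q) + ((j • δ : Γ) : WithTop Γ)) {i : ℕ} (hi : 1 ≤ i) :
    μ f < μ (hasseDeriv i f) + ((i • δ : Γ) : WithTop Γ) := by
  obtain ⟨j, hj, -, hlt⟩ := h
  by_contra! hle
  refine (hlt i hi).not_ge ?_
  calc i • μ Q + j • μ (hasseDeriv i f)
      ≤ i • (μ (hasseDeriv j Q) + ((j • δ : Γ) : WithTop Γ)) + j • μ (hasseDeriv i f) := by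
        gcongr
        exact hQ j hj
    _ = i • μ (hasseDeriv j Q) + j • (μ (hasseDeriv i f) + ((i • δ : Γ) : WithTop Γ)) := by
        rw [nsmul_add, nsmul_add, ← WithTop.coe_nsmul, ← WithTop.coe_nsmul, smul_smul, smul_smul,
          mul_comm i j]
        abel
    _ ≤ i • μ (hasseDeriv j Q) + j • μ f := by gcongr
    _ = j • μ f + i • μ (hasseDeriv j Q) := add_comm _ _

section Extension

variable {L Γ : Type*} [Field L] [AddCommGroup Γ] [LinearOrder Γ] [IsOrderedAddMonoid Γ]
  {νbar : L → WithTop Γ} {μbar : L[X] → WithTop Γ}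
  (hνbar : IsValAdd νbar) (hμbar : IsValAdd μbar) (hextL : ∀ x : L, μbar (C x) = νbar x)
include hνbar hμbar hextL

theorem pairVal_le {a : L} {δ : Γ} (hδ : μbar (X - C a) = δ) (g : L[X]) :
    pairVal νbar a δ g ≤ μbar g := by
  conv_rhs => rw [← sum_taylor_eq g a, Polynomial.sum_def]
  refine hμbar.le_map_sum fun i _ => ?_
  rw [hμbar.map_mul, hextL, hμbar.map_pow, hδ]
  exact pairVal_le_taylor_coeff hνbar a δ g i

theorem pairVal_X_sub_C_of_le {a b : L} {δ : Γ} (hδ : μbar (X - C a) = δ)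
    (hb : μbar (X - C b) ≤ δ) : pairVal νbar a δ (X - C b) = μbar (X - C b) := by
  refine le_antisymm (pairVal_le hνbar hμbar hextL hδ _) ?_
  have hab : μbar (X - C b) ≤ νbar (a - b) := by
    rw [← hextL, C_sub, show C a - C b = (X - C b) - (X - C a) by ring]
    exact (le_min le_rfl (hb.trans_eq hδ.symm)).trans (hμbar.map_sub _ _)
  calc μbar (X - C b) ≤ min (pairVal νbar a δ (X - C a)) (pairVal νbar a δ (C (a - b))) := by
        rw [pairVal_X_sub_C_self hνbar, pairVal_C]
        exact le_min hb hab
    _ ≤ pairVal νbar a δ (X - C a + C (a - b)) := (isValAdd_pairVal hνbar a δ).map_add _ _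
    _ = pairVal νbar a δ (X - C b) := by rw [C_sub, sub_add_sub_cancel]

/-- Factor `G` over `L`: `ν̄(c - θ) = μ̄(X - θ)` by the strict ultrametric inequality applied to
`c - θ = (X - θ) - (X - c)`. -/
theorem valuation_eval_eq_of_roots_lt [IsAlgClosed L] {G : L[X]} {c : L}
    (h : ∀ θ ∈ G.roots, μbar (X - C θ) < μbar (X - C c)) : νbar (G.eval c) = μbar G := by
  have hroot : ∀ θ ∈ G.roots, νbar (c - θ) = μbar (X - C θ) := fun θ hθ => by
    rw [← hextL, C_sub, show C c - C θ = (X - C θ) - (X - C c) by ring]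
    exact hμbar.map_sub_eq_of_lt_left (h θ hθ)
  rw [(IsAlgClosed.splits G).eq_prod_roots]
  simp only [eval_mul, eval_C, eval_multiset_prod, Multiset.map_map, Function.comp_def, eval_sub,
    eval_X, hνbar.map_mul, hμbar.map_mul, hextL, hνbar.map_multiset_prod_map,
    hμbar.map_multiset_prod_map, Multiset.map_congr rfl hroot]

end Extension

section OptimalRoot

variable {K L Γ : Type*} [Field K] [Field L] [Algebra K L] [IsAlgClosed L]
  [AddCommGroup Γ] [LinearOrder Γ] [IsOrderedAddMonoid Γ]
  {μ : K[X] → WithTop Γ} {νbar : L → WithTop Γ} {μbar : L[X] → WithTop Γ}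
  {Q : K[X]} {a : L} {δ : Γ}
  (hνbar : IsValAdd νbar) (hμbar : IsValAdd μbar) (hextL : ∀ x : L, μbar (C x) = νbar x)
  (hres : ∀ f : K[X], μbar (f.map (algebraMap K L)) = μ f)
  (hopt : ∀ b : L, aeval b Q = 0 → μbar (X - C b) ≤ μbar (X - C a))
  (hδ : μbar (X - C a) = δ)
include hνbar hμbar hextL hres hopt hδ

theorem pairVal_map_of_optimal_root (hQm : Q.Monic) :
    pairVal νbar a δ (Q.map (algebraMap K L)) = μ Q := by
  set G := Q.map (algebraMap K L)
  have hG : G = (G.roots.map fun b => X - C b).prod :=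
    (IsAlgClosed.splits G).eq_prod_roots_of_monic (hQm.map _)
  have hroot : ∀ b ∈ G.roots, pairVal νbar a δ (X - C b) = μbar (X - C b) := fun b hb => by
    have hbQ : aeval b Q = 0 := by
      rw [← eval_map_algebraMap]
      exact (isRoot_of_mem_roots hb).eq_zero
    exact pairVal_X_sub_C_of_le hνbar hμbar hextL hδ ((hopt b hbQ).trans_eq hδ)
  rw [← hres]
  change pairVal νbar a δ G = μbar G
  rw [hG, (isValAdd_pairVal hνbar a δ).map_multiset_prod_map, hμbar.map_multiset_prod_map,
    Multiset.map_congr rfl hroot]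

theorem le_hasseDeriv_add_of_optimal_root (hQm : Q.Monic) (j : ℕ) :
    μ Q ≤ μ (hasseDeriv j Q) + ((j • δ : Γ) : WithTop Γ) := by
  calc μ Q = pairVal νbar a δ (Q.map (algebraMap K L)) :=
        (pairVal_map_of_optimal_root hνbar hμbar hextL hres hopt hδ hQm).symm
    _ ≤ pairVal νbar a δ ((hasseDeriv j Q).map (algebraMap K L)) + ((j • δ : Γ) : WithTop Γ) := by
        rw [map_hasseDeriv]
        exact pairVal_le_hasseDeriv_add hνbar a δ _ j
    _ ≤ μ (hasseDeriv j Q) + ((j • δ : Γ) : WithTop Γ) := by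
        rw [← hres]
        gcongr
        exact pairVal_le hνbar hμbar hextL hδ _

variable (hQ : IsABKP μ Q)
include hQ

theorem lt_hasseDeriv_add_of_degree_lt {f : K[X]} (hf : f ≠ 0) (hfQ : f.degree < Q.degree)
    {i : ℕ} (hi : 1 ≤ i) : μ f < μ (hasseDeriv i f) + ((i • δ : Γ) : WithTop Γ) :=
  (hQ.2 f hf hfQ).lt_hasseDeriv_add
    (fun j _ => le_hasseDeriv_add_of_optimal_root hνbar hμbar hextL hres hopt hδ hQ.1 j) hi

variable (hμ : IsValAdd μ)
include hμ

/-- If a root `θ` of `g` had `μ̄(X - θ) ≥ δ`, then in the expansion `g = ∑ (∂ᵢ g)(θ) (X - θ)ⁱ`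
the constant term vanishes and, by induction, `ν̄((∂ᵢ g)(θ)) = μ(∂ᵢ g)`; so every term would have
value `> μ(g)`, contradicting `μ̄(g) = μ(g)`. -/
theorem roots_lt_of_degree_lt {g : K[X]} (hg : g.degree < Q.degree) {θ : L}
    (hθ : θ ∈ (g.map (algebraMap K L)).roots) : μbar (X - C θ) < δ := by
  induction hn : g.natDegree using Nat.strong_induction_on generalizing g θ with
  | _ n ih =>
  by_contra! hθδ
  have hg0 : g ≠ 0 := by
    rintro rfl
    simp at hθ
  have hderiv : ∀ i, 1 ≤ i →
      νbar (((hasseDeriv i g).map (algebraMap K L)).eval θ) = μ (hasseDeriv i g) := by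
    intro i hi
    rw [← hres]
    refine valuation_eval_eq_of_roots_lt hνbar hμbar hextL fun θ' hθ' => ?_
    have h0 : hasseDeriv i g ≠ 0 := by
      rintro h
      simp [h] at hθ'
    have hlt := natDegree_hasseDeriv_lt hi h0
    exact (ih _ (hn ▸ hlt) ((degree_lt_degree hlt).trans hg) hθ' rfl).trans_le hθδ
  have hterm : ∀ i,
      μ g < μbar (C ((taylor θ (g.map (algebraMap K L))).coeff i) * (X - C θ) ^ i) := by
    rintro (_ | i)
    · rw [taylor_coeff_zero, (isRoot_of_mem_roots hθ).eq_zero, C_0, zero_mul, hμbar.map_zero]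
      exact (hμ.ne_top hg0).lt_top
    · rw [hμbar.map_mul, hextL, hμbar.map_pow, taylor_coeff, ← map_hasseDeriv,
        hderiv _ le_add_self]
      calc μ g < μ (hasseDeriv (i + 1) g) + (((i + 1) • δ : Γ) : WithTop Γ) :=
            lt_hasseDeriv_add_of_degree_lt hνbar hμbar hextL hres hopt hδ hQ hg0 hg le_add_self
        _ ≤ μ (hasseDeriv (i + 1) g) + (i + 1) • μbar (X - C θ) := by
            rw [WithTop.coe_nsmul]
            gcongr
  have hcontra := hμbar.lt_map_sum (s := (taylor θ (g.map (algebraMap K L))).support)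
    (hμ.ne_top hg0) fun i _ => hterm i
  have hexpand := sum_taylor_eq (g.map (algebraMap K L)) θ
  rw [Polynomial.sum_def] at hexpand
  rw [hexpand, hres] at hcontra
  exact hcontra.false

theorem valuation_eval_map_of_degree_lt {g : K[X]} (hg : g.degree < Q.degree) :
    νbar ((g.map (algebraMap K L)).eval a) = μ g := by
  rw [← hres]
  exact valuation_eval_eq_of_roots_lt hνbar hμbar hextL fun θ hθ =>
    hδ ▸ roots_lt_of_degree_lt hνbar hμbar hextL hres hopt hδ hQ hμ hg hθ

theorem pairVal_map_of_degree_lt {g : K[X]} (hg : g.degree < Q.degree) :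
    pairVal νbar a δ (g.map (algebraMap K L)) = μ g := by
  rcases eq_or_ne g 0 with rfl | hg0
  · rw [Polynomial.map_zero, (isValAdd_pairVal hνbar a δ).map_zero, hμ.map_zero]
  refine le_antisymm ((pairVal_le_eval hνbar a δ _).trans_eq
    (valuation_eval_map_of_degree_lt hνbar hμbar hextL hres hopt hδ hQ hμ hg)) ?_
  refine (le_pairVal_iff hνbar a δ).mpr fun i => ?_
  rcases i with _ | i
  · simpa using (valuation_eval_map_of_degree_lt hνbar hμbar hextL hres hopt hδ hQ hμ hg).ge
  rw [taylor_coeff, ← map_hasseDeriv]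
  rcases eq_or_ne (hasseDeriv (i + 1) g) 0 with h0 | h0
  · simp [h0, hνbar.map_zero]
  have hlt := natDegree_hasseDeriv_lt le_add_self h0
  rw [valuation_eval_map_of_degree_lt hνbar hμbar hextL hres hopt hδ hQ hμ
    ((degree_lt_degree hlt).trans hg)]
  exact (lt_hasseDeriv_add_of_degree_lt hνbar hμbar hextL hres hopt hδ hQ hg0 hg le_add_self).le

theorem pairVal_map_add_mul (ha : aeval a Q = 0) {r : K[X]} (hr : r.degree < Q.degree)
    (q : L[X]) :
    pairVal νbar a δ (r.map (algebraMap K L) + Q.map (algebraMap K L) * q) =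
      min (μ r) (μ Q + pairVal νbar a δ q) := by
  have hv := isValAdd_pairVal hνbar a δ
  have hpr := pairVal_map_of_degree_lt hνbar hμbar hextL hres hopt hδ hQ hμ hr
  have hpQq : pairVal νbar a δ (Q.map (algebraMap K L) * q) = μ Q + pairVal νbar a δ q := by
    rw [hv.map_mul, pairVal_map_of_optimal_root hνbar hμbar hextL hres hopt hδ hQ.1]
  rcases le_or_gt (μ r) (μ Q + pairVal νbar a δ q) with hle | hlt
  · rw [min_eq_left hle]
    refine le_antisymm ?_ ?_
    · calc _ ≤ νbar ((r.map (algebraMap K L) + Q.map (algebraMap K L) * q).eval a) :=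
            pairVal_le_eval hνbar a δ _
        _ = μ r := by
            rw [eval_add, eval_mul, eval_map_algebraMap Q, ha, zero_mul, add_zero,
              valuation_eval_map_of_degree_lt hνbar hμbar hextL hres hopt hδ hQ hμ hr]
    · calc μ r = min (pairVal νbar a δ (r.map (algebraMap K L)))
            (pairVal νbar a δ (Q.map (algebraMap K L) * q)) := by rw [hpr, hpQq, min_eq_left hle]
        _ ≤ _ := hv.map_add _ _
  · rw [min_eq_right hlt.le, ← hpQq]
    exact hv.map_add_eq_of_lt_right (by rwa [hpr, hpQq])

end OptimalRoot

section Trunc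

variable {K Γ : Type*} [Field K] [AddCommGroup Γ] [LinearOrder Γ] [IsOrderedAddMonoid Γ]
  {μ : K[X] → WithTop Γ} {Q : K[X]}

theorem qCoeff_zero_right (Q : K[X]) (n : ℕ) : qCoeff Q n 0 = 0 := by
  induction n with
  | zero => exact zero_modByMonic Q
  | succ n ih => rw [qCoeff, zero_divByMonic, ih]

theorem qCoeff_eq_zero_of_natDegree_lt (hQd : 0 < Q.degree) {n : ℕ} {f : K[X]}
    (hn : f.natDegree < n) : qCoeff Q n f = 0 := by
  induction n generalizing f with
  | zero => omega
  | succ n ih =>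
    rw [qCoeff]
    rcases eq_or_ne (f /ₘ Q) 0 with h0 | h0
    · rw [h0, qCoeff_zero_right]
    · have hf : f ≠ 0 := by
        rintro rfl
        exact h0 (zero_divByMonic Q)
      exact ih ((natDegree_lt_natDegree h0 (degree_divByMonic_lt f Q hf hQd)).trans_le
        (Nat.lt_succ_iff.mp hn))

variable (hμ : IsValAdd μ)
include hμ

theorem trunc_zero : trunc μ Q 0 = ⊤ := by
  simp [trunc, qCoeff_zero_right, hμ.map_zero]

variable (hQd : 0 < Q.degree)
include hQd

theorem trunc_eq_inf_range {f : K[X]} {N : ℕ} (hN : f.natDegree ≤ N) :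
    trunc μ Q f = (Finset.range (N + 1)).inf fun i => μ (qCoeff Q i f * Q ^ i) := by
  have hsub : Finset.range (f.natDegree + 1) ⊆ Finset.range (N + 1) :=
    Finset.range_subset_range.mpr (by omega)
  refine le_antisymm (Finset.le_inf fun i _ => ?_) (Finset.inf_mono hsub)
  rcases le_or_gt i f.natDegree with hi | hi
  · exact Finset.inf_le (Finset.mem_range_succ_iff.mpr hi)
  · rw [qCoeff_eq_zero_of_natDegree_lt hQd hi, zero_mul, hμ.map_zero]
    exact le_top

theorem trunc_eq_min (hQ : Q.Monic) (f : K[X]) :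
    trunc μ Q f = min (μ (f %ₘ Q)) (μ Q + trunc μ Q (f /ₘ Q)) := by
  have hq : (f /ₘ Q).natDegree ≤ f.natDegree := by
    rw [natDegree_divByMonic f hQ]
    omega
  rw [trunc_eq_inf_range hμ hQd (Nat.le_succ f.natDegree), Finset.range_add_one',
    Finset.inf_insert, Finset.inf_map, trunc_eq_inf_range hμ hQd hq,
    Finset.apply_inf_eq_inf_comp (μ Q + ·) (fun x y => (min_add_add_left _ x y).symm) (add_top _)]
  congr 1
  · rw [pow_zero, mul_one]
    rfl
  · refine Finset.inf_congr rfl fun i _ => ?_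
    change μ (qCoeff Q i (f /ₘ Q) * Q ^ (i + 1)) = μ Q + μ (qCoeff Q i (f /ₘ Q) * Q ^ i)
    rw [pow_succ, ← mul_assoc, hμ.map_mul, add_comm]

end Trunc

theorem pairVal_restricts_to_trunc_general {K L Γ : Type*} [Field K] [Field L] [Algebra K L]
    [IsAlgClosed L] [AddCommGroup Γ] [LinearOrder Γ] [IsOrderedAddMonoid Γ]
    (μ : Polynomial K → WithTop Γ)
    (νbar : L → WithTop Γ) (μbar : Polynomial L → WithTop Γ)
    (hμ : IsValAdd μ) (hνbar : IsValAdd νbar) (hμbar : IsValAdd μbar)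
    (hextL : ∀ x : L, μbar (Polynomial.C x) = νbar x)
    (hres : ∀ f : Polynomial K, μbar (f.map (algebraMap K L)) = μ f)
    (Q : Polynomial K) (hQ : IsABKP μ Q)
    (a : L) (ha : Polynomial.aeval a Q = 0)
    (hopt : ∀ b : L, Polynomial.aeval b Q = 0 →
      μbar (Polynomial.X - Polynomial.C b) ≤ μbar (Polynomial.X - Polynomial.C a))
    (δ : Γ) (hδ : μbar (Polynomial.X - Polynomial.C a) = (δ : WithTop Γ)) :
    pairVal νbar a δ (Q.map (algebraMap K L)) = μ Q ∧
      ∀ f : Polynomial K, pairVal νbar a δ (f.map (algebraMap K L)) = trunc μ Q f := by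
  refine ⟨pairVal_map_of_optimal_root hνbar hμbar hextL hres hopt hδ hQ.1, fun f => ?_⟩
  have hQd : 0 < Q.degree := degree_pos_of_aeval_root hQ.1.ne_zero ha
    fun x hx => (map_eq_zero_iff _ (algebraMap K L).injective).mp hx
  induction hn : f.natDegree using Nat.strong_induction_on generalizing f with
  | _ n ih =>
  have hq : pairVal νbar a δ ((f /ₘ Q).map (algebraMap K L)) = trunc μ Q (f /ₘ Q) := by
    rcases eq_or_ne (f /ₘ Q) 0 with h0 | h0
    · rw [h0, Polynomial.map_zero, (isValAdd_pairVal hνbar a δ).map_zero, trunc_zero hμ]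
    · have hf : f ≠ 0 := by
        rintro rfl
        exact h0 (zero_divByMonic Q)
      exact ih _ (hn ▸ natDegree_lt_natDegree h0 (degree_divByMonic_lt f Q hf hQd)) _ rfl
  calc pairVal νbar a δ (f.map (algebraMap K L))
      = pairVal νbar a δ ((f %ₘ Q).map (algebraMap K L) +
          Q.map (algebraMap K L) * (f /ₘ Q).map (algebraMap K L)) := by
        rw [← Polynomial.map_mul, ← Polynomial.map_add, modByMonic_add_div f]
    _ = trunc μ Q f := by
        rw [pairVal_map_add_mul hνbar hμbar hextL hres hopt hδ hQ hμ ha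
          (degree_modByMonic_lt f hQ.1), hq]
        exact (trunc_eq_min hμ hQd hQ.1 f).symm

/-- for an abstract key polynomial `Q` with optimising root `a` and
`δ = μ̄(X - a)`, one has `μ̄_{X-a}(Q) = μ(Q)`, and the truncation `μ̄_{X-a}`
restricted to `K[X]` equals `μ_Q`. -/
theorem pairVal_restricts_to_trunc {K L Γ : Type*} [Field K] [Field L] [Algebra K L]
    [IsAlgClosed L] [Algebra.IsAlgebraic K L] [AddCommGroup Γ] [LinearOrder Γ] [IsOrderedAddMonoid Γ]
    (ν : K → WithTop Γ) (μ : Polynomial K → WithTop Γ)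
    (νbar : L → WithTop Γ) (μbar : Polynomial L → WithTop Γ)
    (hν : IsValAdd ν) (hμ : IsValAdd μ) (hνbar : IsValAdd νbar) (hμbar : IsValAdd μbar)
    (hextK : ∀ c : K, μ (Polynomial.C c) = ν c)
    (hextL : ∀ x : L, μbar (Polynomial.C x) = νbar x)
    (hres : ∀ f : Polynomial K, μbar (f.map (algebraMap K L)) = μ f)
    (Q : Polynomial K) (hQ : IsABKP μ Q)
    (a : L) (ha : Polynomial.aeval a Q = 0)
    (hopt : ∀ b : L, Polynomial.aeval b Q = 0 →
      μbar (Polynomial.X - Polynomial.C b) ≤ μbar (Polynomial.X - Polynomial.C a))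
    (δ : Γ) (hδ : μbar (Polynomial.X - Polynomial.C a) = (δ : WithTop Γ)) :
    pairVal νbar a δ (Q.map (algebraMap K L)) = μ Q ∧
      ∀ f : Polynomial K, pairVal νbar a δ (f.map (algebraMap K L)) = trunc μ Q f :=
  pairVal_restricts_to_trunc_general μ νbar μbar hμ hνbar hμbar hextL hres Q hQ a ha hopt δ hδ
end
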